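/- arXiv:1911.09274 — 3 statements merged into one kernel-verified Lean document; each statement's English description precedes it below -/
import Mathlib

section
/- Let R be an n×n real symmetric positive definite matrix, H an n×p real matrix of full column rank with p ≤ n, Z an n×q real matrix with columns z₁,…,z_q, h₀ ∈ ℝᵖ, and r₀ ∈ ℝⁿ. Define B̂ := (HᵀR⁻¹H)⁻¹HᵀR⁻¹Z and β̂ₖ := (HᵀR⁻¹H)⁻¹HᵀR⁻¹zₖ. Then the separable-model posterior predictive mean vector ẑ₀ := B̂ᵀh₀ + (Z − HB̂)ᵀR⁻¹r₀ satisfies, for every k = 1,…,q, (ẑ₀)ₖ = h₀ᵀβ̂ₖ + r₀ᵀR⁻¹(zₖ − Hβ̂ₖ), i.e., each component of the separable-model predictive mean equals the predictive mean of the corresponding independent single-output model with the same input correlation. (This is the predictive-mean part of Theorem 1.) -/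
open Matrix

/-- each component of the separable-model posterior predictive mean
`ẑ₀ = B̂ᵀh₀ + (Z − HB̂)ᵀR⁻¹r₀` equals the predictive mean
`h₀ᵀβ̂ₖ + r₀ᵀR⁻¹(zₖ − Hβ̂ₖ)` of the corresponding independent single-output model. -/
theorem separable_predictive_mean_eq_independent {n p q : ℕ}
    (R : Matrix (Fin n) (Fin n) ℝ) (H : Matrix (Fin n) (Fin p) ℝ)
    (Z : Matrix (Fin n) (Fin q) ℝ)
    (hR : R.PosDef) (hH : H.rank = p) (hpn : p ≤ n)
    (h₀ : Fin p → ℝ) (r₀ : Fin n → ℝ)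
    (Bhat : Matrix (Fin p) (Fin q) ℝ)
    (hB : Bhat = (Hᵀ * R⁻¹ * H)⁻¹ * Hᵀ * R⁻¹ * Z)
    (betahat : Fin q → Fin p → ℝ)
    (hbeta : ∀ k, betahat k = ((Hᵀ * R⁻¹ * H)⁻¹ * Hᵀ * R⁻¹) *ᵥ (fun i => Z i k))
    (zhat₀ : Fin q → ℝ)
    (hz : zhat₀ = Bhatᵀ *ᵥ h₀ + (Z - H * Bhat)ᵀ *ᵥ (R⁻¹ *ᵥ r₀)) :
    ∀ k : Fin q,
      zhat₀ k = h₀ ⬝ᵥ betahat k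
        + r₀ ⬝ᵥ (R⁻¹ *ᵥ ((fun i => Z i k) - H *ᵥ betahat k)) := by
  intro k
  have hRt : R⁻¹ᵀ = R⁻¹ := by
    rw [transpose_nonsing_inv]
    congr 1
    simpa using hR.isHermitian.eq
  have hRs : ∀ i j, R⁻¹ i j = R⁻¹ j i := fun i j =>
    (congrFun (congrFun hRt i) j).symm
  have hcol : ∀ j, betahat k j = Bhat j k := by
    intro j
    simp [hbeta, hB, mulVec, mul_apply, dotProduct]
  subst hz
  simp only [Pi.add_apply]
  congr 1
  · simp only [mulVec, dotProduct, transpose_apply, hcol]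
    exact Finset.sum_congr rfl fun j _ => mul_comm _ _
  · simp only [mulVec, dotProduct, transpose_apply]
    have hw : ∀ i, ((fun i => Z i k) - H *ᵥ betahat k) i = (Z - H * Bhat) i k := fun i => by
      simp [mulVec, mul_apply, hcol, dotProduct, Matrix.sub_apply]
    simp only [hw]
    simp only [Finset.mul_sum]
    rw [Finset.sum_comm]
    refine Finset.sum_congr rfl fun l _ => Finset.sum_congr rfl fun i _ => ?_
    rw [hRs i l]; ring
end

section
/- Let R be an n×n real symmetric positive definite matrix, H an n×p real matrix of full column rank with n > p, and Z an n×q real matrix with columns z₁,…,z_q. Define B̂ := (HᵀR⁻¹H)⁻¹HᵀR⁻¹Z, β̂ₖ := (HᵀR⁻¹H)⁻¹HᵀR⁻¹zₖ, the separable-model scale estimator Σ̂ := (n−p)⁻¹(Z − HB̂)ᵀR⁻¹(Z − HB̂), and the independent-model variance estimators σ̂ₖ² := (n−p)⁻¹(zₖ − Hβ̂ₖ)ᵀR⁻¹(zₖ − Hβ̂ₖ). Then for every k = 1,…,q, the k-th diagonal entry of Σ̂ equals σ̂ₖ². (This is the predictive-variance part of Theorem 1: the marginal predictive scales under the separable model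 and under the independent model with the same input correlation coincide.) -/
/-! Column by column, `B̂` acts on `zₖ` exactly as `β̂ₖ` does, so the `k`-th column of the
residual `Z - H B̂` is `zₖ - H β̂ₖ`; and the `k`-th diagonal entry of `Aᵀ M A` is the quadratic
form of `M` at the `k`-th column of `A`. -/

open Matrix

namespace Matrix

variable {l m n o α : Type*} [Fintype m] [Fintype n]

theorem transpose_mul_apply_eq_mulVec [NonUnitalNonAssocSemiring α] (A : Matrix l m α)
    (B : Matrix m o α) (k : o) : (A * B)ᵀ k = A *ᵥ Bᵀ k :=
  rfl

theorem mul_mul_apply_eq_dotProduct_mulVec [NonUnitalSemiring α] (A : Matrix l m α)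
    (M : Matrix m n α) (B : Matrix n o α) (i : l) (j : o) :
    (A * M * B) i j = A i ⬝ᵥ M *ᵥ Bᵀ j := by
  rw [Matrix.mul_assoc, mul_apply', ← transpose_mul_apply_eq_mulVec]
  rfl

end Matrix

theorem separable_scale_diag_eq_independent_variance_general {n p q : ℕ}
    (R : Matrix (Fin n) (Fin n) ℝ) (H : Matrix (Fin n) (Fin p) ℝ)
    (Z : Matrix (Fin n) (Fin q) ℝ)
    (Bhat : Matrix (Fin p) (Fin q) ℝ)
    (hB : Bhat = (Hᵀ * R⁻¹ * H)⁻¹ * Hᵀ * R⁻¹ * Z)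
    (betahat : Fin q → Fin p → ℝ)
    (hbeta : ∀ k, betahat k = ((Hᵀ * R⁻¹ * H)⁻¹ * Hᵀ * R⁻¹) *ᵥ (fun i => Z i k))
    (Sighat : Matrix (Fin q) (Fin q) ℝ)
    (hSig : Sighat = ((n : ℝ) - (p : ℝ))⁻¹ • ((Z - H * Bhat)ᵀ * R⁻¹ * (Z - H * Bhat)))
    (sigmahat2 : Fin q → ℝ)
    (hsig : ∀ k, sigmahat2 k = ((n : ℝ) - (p : ℝ))⁻¹ *
      (((fun i => Z i k) - H *ᵥ betahat k) ⬝ᵥ (R⁻¹ *ᵥ ((fun i => Z i k) - H *ᵥ betahat k)))) :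
    ∀ k : Fin q, Sighat k k = sigmahat2 k := by
  intro k
  have residual_col : (Z - H * Bhat)ᵀ k = (fun i => Z i k) - H *ᵥ betahat k := by
    rw [hbeta, hB]
    rfl
  simp only [hSig, hsig, Matrix.smul_apply, smul_eq_mul, mul_mul_apply_eq_dotProduct_mulVec,
    residual_col]

/-- the k-th diagonal entry of the separable-model scale estimator
`Σ̂ = (n−p)⁻¹(Z − HB̂)ᵀR⁻¹(Z − HB̂)` equals the independent-model variance estimator
`σ̂ₖ² = (n−p)⁻¹(zₖ − Hβ̂ₖ)ᵀR⁻¹(zₖ − Hβ̂ₖ)`. -/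
theorem separable_scale_diag_eq_independent_variance {n p q : ℕ}
    (R : Matrix (Fin n) (Fin n) ℝ) (H : Matrix (Fin n) (Fin p) ℝ)
    (Z : Matrix (Fin n) (Fin q) ℝ)
    (hR : R.PosDef) (hH : H.rank = p) (hpn : p < n)
    (Bhat : Matrix (Fin p) (Fin q) ℝ)
    (hB : Bhat = (Hᵀ * R⁻¹ * H)⁻¹ * Hᵀ * R⁻¹ * Z)
    (betahat : Fin q → Fin p → ℝ)
    (hbeta : ∀ k, betahat k = ((Hᵀ * R⁻¹ * H)⁻¹ * Hᵀ * R⁻¹) *ᵥ (fun i => Z i k))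
    (Sighat : Matrix (Fin q) (Fin q) ℝ)
    (hSig : Sighat = ((n : ℝ) - (p : ℝ))⁻¹ • ((Z - H * Bhat)ᵀ * R⁻¹ * (Z - H * Bhat)))
    (sigmahat2 : Fin q → ℝ)
    (hsig : ∀ k, sigmahat2 k = ((n : ℝ) - (p : ℝ))⁻¹ *
      (((fun i => Z i k) - H *ᵥ betahat k) ⬝ᵥ (R⁻¹ *ᵥ ((fun i => Z i k) - H *ᵥ betahat k)))) :
    ∀ k : Fin q, Sighat k k = sigmahat2 k :=
  separable_scale_diag_eq_independent_variance_general R H Z Bhat hB betahat hbeta Sighat hSig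
    sigmahat2 hsig
end

section
/- Let A be an n×n real strictly lower triangular matrix and D an n×n real diagonal matrix with strictly positive diagonal entries. Then C̃ := (I − A)⁻¹ D (I − A)⁻ᵀ is symmetric positive definite. In particular, the nearest-neighbor Gaussian process induces a valid (positive definite) covariance matrix on any finite set of inputs. -/
/-!
Since `A` is strictly lower triangular, `1 - A` is lower triangular with unit diagonal, so
`det (1 - A) = 1` and `B := (1 - A)⁻¹` is invertible. Over `ℝ` we have `((1 - A)ᵀ)⁻¹ = Bᴴ`, so
`C̃ = B D Bᴴ` is a congruence of the positive definite diagonal matrix `D` by an invertible matrix.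
-/

open Matrix

namespace Matrix

variable {m R : Type*} [DecidableEq m]

theorem isLowerTriangular_one_sub [Preorder m] [Ring R] {A : Matrix m m R}
    (hA : ∀ i j, i ≤ j → A i j = 0) : (1 - A).IsLowerTriangular := by
  intro i j hij
  have hlt : i < j := hij
  simp [one_apply_ne hlt.ne, hA i j hlt.le]

theorem det_one_sub_of_strictlyLowerTriangular [Fintype m] [LinearOrder m] [CommRing R]
    {A : Matrix m m R} (hA : ∀ i j, i ≤ j → A i j = 0) : (1 - A).det = 1 := by
  rw [det_of_isLowerTriangular _ (isLowerTriangular_one_sub hA)]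
  simp [hA _ _ le_rfl]

end Matrix

/-- the NNGP induces a valid covariance matrix:
`C̃ = (I − A)⁻¹ D (I − A)⁻ᵀ` is symmetric positive definite when `A` is strictly lower
triangular and `D` is diagonal with strictly positive diagonal entries. -/
theorem nngp_covariance_posDef {n : ℕ}
    (A : Matrix (Fin n) (Fin n) ℝ) (hA : ∀ i j : Fin n, i ≤ j → A i j = 0)
    (d : Fin n → ℝ) (hd : ∀ i, 0 < d i)
    (Ctilde : Matrix (Fin n) (Fin n) ℝ)
    (hC : Ctilde = (1 - A)⁻¹ * Matrix.diagonal d * ((1 - A)ᵀ)⁻¹) :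
    Ctilde.PosDef := by
  have hunit : IsUnit (1 - A)⁻¹ := by
    rw [isUnit_nonsing_inv_iff, isUnit_iff_isUnit_det, det_one_sub_of_strictlyLowerTriangular hA]
    exact isUnit_one
  have hD : (diagonal d).PosDef := posDef_diagonal_iff.mpr hd
  rw [hC, ← transpose_nonsing_inv, ← conjTranspose_eq_transpose_of_trivial]
  exact hD.mul_mul_conjTranspose_same (vecMul_injective_of_isUnit hunit)
end
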